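/- For closed subgroups K and K′ of G and elements g, h ∈ G, the containment Fix(K) ⊇ ρ(g⁻¹h)(Fix(K′)) holds if and only if h⁻¹gKg⁻¹h ⊆ K′. In particular, if this containment of fixed spaces holds then some G-conjugate of K is contained in K′. -/

import Mathlib

/-!
Transporting along `ρ c` with `c = h⁻¹g` turns the containment into `Fix(K') ≤ Fix(cKc⁻¹)`,
since `ρ c` maps `Fix(H)` onto `Fix(cHc⁻¹)`. For a closed subgroup `A`, `Fix(A) ≤ Fix(L)` forces
`L ≤ A`: the subgroup `A ⊔ L` has fixed space `Fix(A) ∩ Fix(L) = Fix(A)`, so closedness gives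
`A ⊔ L = A`.
-/

variable {G : Type*} [Group G] {V : Type*} [AddCommGroup V] [Module ℂ V]

def fixedSpace (ρ : Representation ℂ G V) (H : Subgroup G) : Submodule ℂ V where
  carrier := {v | ∀ h ∈ H, ρ h v = v}
  add_mem' := by
    intro a b ha hb h hh
    rw [map_add, ha h hh, hb h hh]
  zero_mem' := by
    intro h hh
    exact map_zero _
  smul_mem' := by
    intro c a ha h hh
    rw [map_smul, ha h hh]

def IsClosedSubgroup (ρ : Representation ℂ G V) (H : Subgroup G) : Prop :=
  ∀ K : Subgroup G, H ≤ K → fixedSpace ρ K = fixedSpace ρ H → K = H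

open Pointwise

section

variable {ρ : Representation ℂ G V}

def stabilizer (ρ : Representation ℂ G V) (v : V) : Subgroup G where
  carrier := {x | ρ x v = v}
  one_mem' := by simp
  mul_mem' {a b} ha hb := by simp_all
  inv_mem' {a} ha := by simpa [ρ.inv_apply_eq_iff] using ha.symm

lemma mem_fixedSpace_iff_le_stabilizer {H : Subgroup G} {v : V} :
    v ∈ fixedSpace ρ H ↔ H ≤ stabilizer ρ v :=
  Iff.rfl

lemma fixedSpace_antitone : Antitone (fixedSpace ρ) :=
  fun _ _ hle _ hv x hx => hv x (hle hx)

lemma fixedSpace_sup (A B : Subgroup G) :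
    fixedSpace ρ (A ⊔ B) = fixedSpace ρ A ⊓ fixedSpace ρ B := by
  ext v
  simp only [Submodule.mem_inf, mem_fixedSpace_iff_le_stabilizer, sup_le_iff]

lemma IsClosedSubgroup.fixedSpace_le_iff {A K : Subgroup G} (hA : IsClosedSubgroup ρ A) :
    fixedSpace ρ A ≤ fixedSpace ρ K ↔ K ≤ A := by
  refine ⟨fun hle => ?_, fun hle => fixedSpace_antitone hle⟩
  have hsup : A ⊔ K = A := hA _ le_sup_left (by rw [fixedSpace_sup, inf_eq_left.mpr hle])
  exact hsup ▸ le_sup_right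

lemma conj_apply_apply (c k : G) (w : V) :
    ρ (MulAut.conj c k) (ρ c w) = ρ c (ρ k w) := by
  simp only [MulAut.conj_apply, ← Module.End.mul_apply, ← map_mul, inv_mul_cancel_right]

lemma map_fixedSpace (c : G) (H : Subgroup G) :
    (fixedSpace ρ H).map (ρ c) = fixedSpace ρ (MulAut.conj c • H) := by
  ext v
  constructor
  · rintro ⟨w, hw, rfl⟩ - ⟨k, hk, rfl⟩
    exact (conj_apply_apply c k w).trans (congrArg (ρ c) (hw k hk))
  · intro hv
    refine ⟨ρ c⁻¹ v, fun k hk => (ρ.apply_bijective c).1 ?_, ρ.self_inv_apply c v⟩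
    have hfix := hv _ (Subgroup.smul_mem_pointwise_smul k (MulAut.conj c) H hk)
    rwa [← ρ.self_inv_apply c v, MulAut.smul_def, conj_apply_apply] at hfix

end

theorem fixedSpace_map_le_iff_conj_le
    (ρ : Representation ℂ G V)
    (K K' : Subgroup G) (hK' : IsClosedSubgroup ρ K')
    (g h : G) :
    ((fixedSpace ρ K').map (ρ (g⁻¹ * h)) ≤ fixedSpace ρ K ↔
      K.map (MulAut.conj (h⁻¹ * g)).toMonoidHom ≤ K') ∧
    ((fixedSpace ρ K').map (ρ (g⁻¹ * h)) ≤ fixedSpace ρ K →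
      ∃ a : G, K.map (MulAut.conj a).toMonoidHom ≤ K') := by
  set c := h⁻¹ * g
  have hc : g⁻¹ * h = c⁻¹ := by rw [mul_inv_rev, inv_inv]
  have key : (fixedSpace ρ K').map (ρ c⁻¹) ≤ fixedSpace ρ K ↔ MulAut.conj c • K ≤ K' := by
    rw [← Submodule.map_le_map_iff_of_injective (ρ.apply_bijective c).1, map_fixedSpace,
      map_fixedSpace, map_fixedSpace, smul_smul, ← map_mul, mul_inv_cancel, map_one, one_smul,
      hK'.fixedSpace_le_iff]
  rw [hc]
  -- `MulAut.conj c • K` is by definition `K.map (MulAut.conj c).toMonoidHom`.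
  exact ⟨key, fun hle => ⟨c, key.mp hle⟩⟩
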